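/- Let G be a simple connected C4-free positively LLY-curved graph with minimum degree at least 2. Then the maximum degree of G is at most 6. -/
import Mathlib


open Finset

noncomputable section
open scoped Classical

variable {V : Type*}

/-- Degree of a vertex. -/
def deg [Fintype V] (G : SimpleGraph V) (x : V) : ℕ :=
  (Finset.univ.filter fun z => G.Adj x z).card

/-- Maximum degree. -/
def maxDeg [Fintype V] (G : SimpleGraph V) : ℕ :=
  Finset.univ.sup (deg G)

/-- Normalized graph Laplacian. -/
def lap [Fintype V] (G : SimpleGraph V) (f : V → ℝ) (x : V) : ℝ :=
  (deg G x : ℝ)⁻¹ * ∑ z ∈ Finset.univ.filter (fun z => G.Adj x z), (f z - f x)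

/-- `f` is 1-Lipschitz with respect to the graph distance. -/
def Lip1 (G : SimpleGraph V) (f : V → ℝ) : Prop :=
  ∀ u v : V, |f u - f v| ≤ (G.dist u v : ℝ)

/-- Lin-Lu-Yau curvature via the Münch–Wojciechowski limit-free formulation. -/
def kappa [Fintype V] (G : SimpleGraph V) (x y : V) : ℝ :=
  sInf {r : ℝ | ∃ f : V → ℝ, Lip1 G f ∧ f y - f x = 1 ∧ r = lap G f x - lap G f y}

/-- Every edge has positive Lin-Lu-Yau curvature. -/
def PosLLY [Fintype V] (G : SimpleGraph V) : Prop :=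
  ∀ x y : V, G.Adj x y → 0 < kappa G x y

/-- `G` contains no 4-cycle (as a subgraph). -/
def C4Free (G : SimpleGraph V) : Prop :=
  ∀ a b c d : V, a ≠ b → b ≠ c → c ≠ d → d ≠ a → a ≠ c → b ≠ d →
    ¬(G.Adj a b ∧ G.Adj b c ∧ G.Adj c d ∧ G.Adj d a)

/-- Cycle graph on `ZMod n`. -/
def cyc (n : ℕ) : SimpleGraph (ZMod n) :=
  SimpleGraph.fromRel (fun i j => j = i + 1)

/-- Friendship graph `F_k`: `k` triangles sharing the common vertex `0`. -/
def friendship (k : ℕ) : SimpleGraph (Fin (2 * k + 1)) :=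
  SimpleGraph.fromRel (fun i j => i.val = 0 ∨ j.val = 0 ∨ (i.val + 1) / 2 = (j.val + 1) / 2)

/-- The graph `T`: a triangle `0,1,2` and a vertex `3` joined to each triangle
vertex by a path of length two (through `4,5,6` respectively). -/
def graphT : SimpleGraph (Fin 7) :=
  SimpleGraph.fromRel (fun i j => (i, j) ∈
    ([(0,1),(1,2),(0,2),(0,4),(4,3),(1,5),(5,3),(2,6),(6,3)] : List (Fin 7 × Fin 7)))

section AuxLLY
variable {G : SimpleGraph V}

private lemma two_le_dist (hconn : G.Connected) {u v : V} (hne : u ≠ v)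
    (hnadj : ¬ G.Adj u v) : 2 ≤ G.dist u v := by
  have h0 : 0 < G.dist u v := hconn.pos_dist_of_ne hne
  have h1 : G.dist u v ≠ 1 := fun h => hnadj (SimpleGraph.dist_eq_one_iff_adj.mp h)
  omega

private lemma lip1_of_adj (hconn : G.Connected) {f : V → ℝ}
    (h : ∀ u v : V, G.Adj u v → |f u - f v| ≤ 1) : Lip1 G f := by
  have key : ∀ (u v : V) (p : G.Walk u v), |f u - f v| ≤ (p.length : ℝ) := by
    intro u v p
    induction p with
    | nil => simp
    | @cons a b c hadj q ih =>
      have h1 := h a b hadj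
      have habs : |f a - f c| ≤ |f a - f b| + |f b - f c| := abs_sub_le _ _ _
      simp only [SimpleGraph.Walk.length_cons]
      push_cast
      linarith
  intro u v
  obtain ⟨p, hp⟩ := hconn.exists_walk_length_eq_dist u v
  calc |f u - f v| ≤ (p.length : ℝ) := key u v p
  _ = (G.dist u v : ℝ) := by rw [hp]

private lemma abs_lap_le [Fintype V] {f : V → ℝ} (hf : Lip1 G f) (v : V) :
    |lap G f v| ≤ 1 := by
  rcases Nat.eq_zero_or_pos (deg G v) with h0 | hpos
  · have hN : (Finset.univ.filter (fun z => G.Adj v z)) = ∅ := Finset.card_eq_zero.mp h0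
    rw [lap, hN]
    simp
  · have hterm : ∀ z ∈ Finset.univ.filter (fun z => G.Adj v z), |f z - f v| ≤ 1 := by
      intro z hz
      have hadj : G.Adj v z := (Finset.mem_filter.mp hz).2
      have h1 := hf z v
      have hd : G.dist z v = 1 := SimpleGraph.dist_eq_one_iff_adj.mpr hadj.symm
      rw [hd] at h1; exact_mod_cast h1
    have hsum : |∑ z ∈ Finset.univ.filter (fun z => G.Adj v z), (f z - f v)| ≤ (deg G v : ℝ) := by
      calc |∑ z ∈ Finset.univ.filter (fun z => G.Adj v z), (f z - f v)|
          ≤ ∑ z ∈ Finset.univ.filter (fun z => G.Adj v z), |f z - f v| :=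
            Finset.abs_sum_le_sum_abs _ _
        _ ≤ ∑ _z ∈ Finset.univ.filter (fun z => G.Adj v z), (1:ℝ) := Finset.sum_le_sum hterm
        _ = (deg G v : ℝ) := by simp [deg]
    have hd : (0:ℝ) < (deg G v : ℝ) := by exact_mod_cast hpos
    rw [lap, abs_mul, abs_inv, Nat.abs_cast]
    calc (deg G v : ℝ)⁻¹ * |∑ z ∈ Finset.univ.filter (fun z => G.Adj v z), (f z - f v)|
        ≤ (deg G v : ℝ)⁻¹ * (deg G v : ℝ) := by
          exact mul_le_mul_of_nonneg_left hsum (by positivity)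
      _ = 1 := inv_mul_cancel₀ (ne_of_gt hd)

private lemma zcard_le_one (h4 : C4Free G) [Fintype V] {x y : V} (hxy : G.Adj x y) :
    (Finset.univ.filter (fun z => G.Adj x z ∧ G.Adj y z)).card ≤ 1 := by
  by_contra h
  push_neg at h
  obtain ⟨z1, hz1, z2, hz2, hne⟩ := Finset.one_lt_card.mp h
  rw [Finset.mem_filter] at hz1 hz2
  obtain ⟨-, hxz1, hyz1⟩ := hz1
  obtain ⟨-, hxz2, hyz2⟩ := hz2
  exact h4 x z1 y z2 hxz1.ne hyz1.ne' hyz2.ne hxz2.ne' hxy.ne hne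
    ⟨hxz1, hyz1.symm, hyz2, hxz2.symm⟩

private lemma even_card_of_invol {α : Type*} (φ : α → α) :
    ∀ s : Finset α, (∀ a ∈ s, φ a ∈ s) → (∀ a ∈ s, φ (φ a) = a) → (∀ a ∈ s, φ a ≠ a) →
      Even s.card := by
  intro s
  induction s using Finset.strongInduction with
  | _ s ih =>
    intro hmem hinv hne
    rcases s.eq_empty_or_nonempty with rfl | ⟨a, ha⟩
    · simp
    have hfa : φ a ∈ s := hmem a ha
    have hfane : φ a ≠ a := hne a ha
    have hmem' : ∀ b, b ∈ (s.erase a).erase (φ a) ↔ b ∈ s ∧ b ≠ a ∧ b ≠ φ a := by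
      intro b
      simp only [Finset.mem_erase]
      tauto
    have hsub : (s.erase a).erase (φ a) ⊂ s :=
      lt_of_le_of_lt (Finset.erase_subset _ _) (Finset.erase_ssubset ha)
    have hEven : Even ((s.erase a).erase (φ a)).card := by
      apply ih _ hsub
      · intro b hb
        rw [hmem'] at hb ⊢
        obtain ⟨hbs, hba, hbfa⟩ := hb
        refine ⟨hmem b hbs, fun h => hbfa ?_, fun h => hba ?_⟩
        · rw [← hinv b hbs, h]
        · have := congrArg φ h
          rw [hinv b hbs, hinv a ha] at this
          exact this
      · intro b hb; exact hinv b ((hmem' b).mp hb).1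
      · intro b hb; exact hne b ((hmem' b).mp hb).1
    have h2 : 1 < s.card := Finset.one_lt_card.mpr ⟨a, ha, φ a, hfa, hfane.symm⟩
    have hcard : ((s.erase a).erase (φ a)).card = s.card - 2 := by
      rw [Finset.card_erase_of_mem (Finset.mem_erase.mpr ⟨hfane, hfa⟩),
        Finset.card_erase_of_mem ha]
      omega
    rw [hcard] at hEven
    obtain ⟨k, hk⟩ := hEven
    exact ⟨k + 1, by omega⟩

private lemma kappa_le_bound [Fintype V] (hconn : G.Connected) (h4 : C4Free G)
    {x y : V} (hxy : G.Adj x y)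
    (hW : ((Finset.univ.filter (fun z => G.Adj x z)) \
      insert y (Finset.univ.filter (fun z => G.Adj x z ∧ G.Adj y z))).Nonempty) :
    kappa G x y ≤ (2 + 2 * ((Finset.univ.filter (fun z => G.Adj x z ∧ G.Adj y z)).card : ℝ))
      / (deg G x : ℝ) + 1 / (deg G y : ℝ) - 1 := by
  set Nx := Finset.univ.filter (fun z => G.Adj x z) with hNx
  set Z := Finset.univ.filter (fun z => G.Adj x z ∧ G.Adj y z) with hZ
  set W := Nx \ insert y Z with hWdef
  -- basic membership facts
  have hWmem : ∀ w ∈ W, G.Adj x w ∧ w ≠ y ∧ ¬ G.Adj y w := by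
    intro w hw
    rw [hWdef, Finset.mem_sdiff, Finset.mem_insert] at hw
    push_neg at hw
    obtain ⟨hwNx, hne, hZw⟩ := hw
    have hadj : G.Adj x w := (Finset.mem_filter.mp hwNx).2
    exact ⟨hadj, hne, fun h => hZw (Finset.mem_filter.mpr ⟨Finset.mem_univ _, hadj, h⟩)⟩
  have hno : ∀ w ∈ W, ∀ z, G.Adj y z → z ≠ x → w ≠ z → ¬ G.Adj w z := by
    intro w hw z hyz hzx hwz hadj
    obtain ⟨hxw, hwy, -⟩ := hWmem w hw
    exact h4 x w z y hxw.ne hwz hyz.ne' hxy.ne' hzx.symm hwy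
      ⟨hxw, hadj, hyz.symm, hxy.symm⟩
  have hdist2 : ∀ w ∈ W, ∀ z, G.Adj y z → z ≠ x → 2 ≤ G.dist w z := by
    intro w hw z hyz hzx
    by_cases hwz : w = z
    · exfalso
      have hzZ : z ∈ Z := Finset.mem_filter.mpr
        ⟨Finset.mem_univ _, hwz ▸ (hWmem w hw).1, hyz⟩
      rw [hWdef, Finset.mem_sdiff, Finset.mem_insert] at hw
      exact hw.2 (Or.inr (hwz ▸ hzZ))
    · exact two_le_dist hconn hwz (hno w hw z hyz hzx hwz)
  have hdisty : ∀ w ∈ W, 2 ≤ G.dist w y := by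
    intro w hw
    obtain ⟨-, hwy, hnadj⟩ := hWmem w hw
    exact two_le_dist hconn hwy (fun h => hnadj h.symm)
  -- the test function
  set A := insert y W with hA
  have hAne : A.Nonempty := ⟨y, Finset.mem_insert_self _ _⟩
  set g : V → ℝ := fun a => if a = y then 1 else -1 with hg
  set f : V → ℝ := fun v => A.inf' hAne (fun a => g a + (G.dist a v : ℝ)) with hf
  have hfle : ∀ a ∈ A, ∀ v, f v ≤ g a + (G.dist a v : ℝ) := by
    intro a ha v
    exact Finset.inf'_le _ ha
  have hlef : ∀ (v : V) (c : ℝ), (∀ a ∈ A, c ≤ g a + (G.dist a v : ℝ)) → c ≤ f v := by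
    intro v c h
    exact Finset.le_inf' _ _ h
  have hgy : g y = 1 := by simp [hg]
  have hgw : ∀ w ∈ W, g w = -1 := by
    intro w hw
    simp [hg, (hWmem w hw).2.1]
  obtain ⟨w0, hw0⟩ := hW
  have hw0' : w0 ∈ W := hw0
  -- value computations
  have hfx : f x = 0 := by
    apply le_antisymm
    · have h1 := hfle w0 (Finset.mem_insert_of_mem hw0') x
      have hd : G.dist w0 x = 1 :=
        SimpleGraph.dist_eq_one_iff_adj.mpr (hWmem w0 hw0').1.symm
      rw [hgw w0 hw0', hd] at h1
      simpa using h1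
    · apply hlef
      intro a ha
      rcases Finset.mem_insert.mp ha with rfl | haW
      · rw [hgy]; positivity
      · rw [hgw a haW]
        have hne : a ≠ x := (hWmem a haW).1.ne'
        have := hconn.pos_dist_of_ne hne
        have : (1:ℝ) ≤ (G.dist a x : ℝ) := by exact_mod_cast this
        linarith
  have hfy : f y = 1 := by
    apply le_antisymm
    · have h1 := hfle y (Finset.mem_insert_self _ _) y
      rw [hgy, SimpleGraph.dist_self] at h1
      simpa using h1
    · apply hlef
      intro a ha
      rcases Finset.mem_insert.mp ha with rfl | haW
      · rw [hgy, SimpleGraph.dist_self]; norm_num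
      · rw [hgw a haW]
        have := hdisty a haW
        have : (2:ℝ) ≤ (G.dist a y : ℝ) := by exact_mod_cast this
        linarith
  have hfw : ∀ w ∈ W, f w = -1 := by
    intro w hw
    apply le_antisymm
    · have h1 := hfle w (Finset.mem_insert_of_mem hw) w
      rw [hgw w hw, SimpleGraph.dist_self] at h1
      simpa using h1
    · apply hlef
      intro a ha
      have hga : (-1:ℝ) ≤ g a := by
        rw [hg]; dsimp only; split <;> norm_num
      have : (0:ℝ) ≤ (G.dist a w : ℝ) := by positivity
      linarith
  have hfz0 : ∀ z ∈ Z, f z = 1 := by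
    intro z hz
    obtain ⟨-, hxz, hyz⟩ := Finset.mem_filter.mp hz
    apply le_antisymm
    · have h1 := hfle w0 (Finset.mem_insert_of_mem hw0') z
      have htri : G.dist w0 z ≤ G.dist w0 x + G.dist x z := hconn.dist_triangle
      have hd1 : G.dist w0 x = 1 :=
        SimpleGraph.dist_eq_one_iff_adj.mpr (hWmem w0 hw0').1.symm
      have hd2 : G.dist x z = 1 := SimpleGraph.dist_eq_one_iff_adj.mpr hxz
      rw [hd1, hd2] at htri
      have : (G.dist w0 z : ℝ) ≤ 2 := by exact_mod_cast htri
      rw [hgw w0 hw0'] at h1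
      linarith
    · apply hlef
      intro a ha
      rcases Finset.mem_insert.mp ha with h | haW
      · rw [h, hgy]
        have : (0:ℝ) ≤ (G.dist y z : ℝ) := by positivity
        linarith
      · rw [hgw a haW]
        have := hdist2 a haW z hyz hxz.ne'
        have : (2:ℝ) ≤ (G.dist a z : ℝ) := by exact_mod_cast this
        linarith
  have hfz : ∀ z, G.Adj y z → z ≠ x → (1:ℝ) ≤ f z := by
    intro z hyz hzx
    apply hlef
    intro a ha
    rcases Finset.mem_insert.mp ha with h | haW
    · rw [h, hgy]
      have : (0:ℝ) ≤ (G.dist y z : ℝ) := by positivity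
      linarith
    · rw [hgw a haW]
      have := hdist2 a haW z hyz hzx
      have : (2:ℝ) ≤ (G.dist a z : ℝ) := by exact_mod_cast this
      linarith
  -- Lipschitz
  have hflipadj : ∀ u v : V, G.Adj u v → f u - f v ≤ 1 := by
    intro u v huv
    obtain ⟨a, ha, hfa⟩ := Finset.exists_mem_eq_inf' hAne (fun a => g a + (G.dist a v : ℝ))
    have h1 : f u ≤ g a + (G.dist a u : ℝ) := hfle a ha u
    have htri : G.dist a u ≤ G.dist a v + G.dist v u := hconn.dist_triangle
    have hd : G.dist v u = 1 := SimpleGraph.dist_eq_one_iff_adj.mpr huv.symm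
    rw [hd] at htri
    have htri' : (G.dist a u : ℝ) ≤ (G.dist a v : ℝ) + 1 := by exact_mod_cast htri
    have h2 : f v = g a + (G.dist a v : ℝ) := hfa
    linarith
  have hlip : Lip1 G f := by
    apply lip1_of_adj hconn
    intro u v huv
    rw [abs_sub_le_iff]
    exact ⟨hflipadj u v huv, hflipadj v u huv.symm⟩
  -- cardinalities
  have hyNx : y ∈ Nx := Finset.mem_filter.mpr ⟨Finset.mem_univ _, hxy⟩
  have hynZ : y ∉ Z := by
    intro h
    exact G.irrefl (Finset.mem_filter.mp h).2.2
  have hsubNx : insert y Z ⊆ Nx := by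
    intro a ha
    rcases Finset.mem_insert.mp ha with rfl | haZ
    · exact hyNx
    · exact Finset.mem_filter.mpr ⟨Finset.mem_univ _, (Finset.mem_filter.mp haZ).2.1⟩
  have hcards : W.card + (Z.card + 1) = deg G x := by
    have h1 := Finset.card_sdiff_add_card_eq_card hsubNx
    rw [Finset.card_insert_of_notMem hynZ] at h1
    exact h1
  have hDpos : 0 < deg G x := by
    have : w0 ∈ Nx := (Finset.mem_sdiff.mp hw0').1
    have : Nx.Nonempty := ⟨w0, this⟩
    simpa [deg, hNx] using Finset.card_pos.mpr this
  have hDpos' : (0:ℝ) < (deg G x : ℝ) := by exact_mod_cast hDpos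
  -- lap at x
  have hlapx : lap G f x = (2 + 2 * (Z.card : ℝ)) / (deg G x : ℝ) - 1 := by
    have hsumW : ∑ z ∈ W, f z = -(W.card : ℝ) := by
      rw [Finset.sum_congr rfl hfw]
      simp
    have hsumI : ∑ z ∈ insert y Z, f z = 1 + (Z.card : ℝ) := by
      rw [Finset.sum_insert hynZ, hfy, Finset.sum_congr rfl hfz0]
      simp
    have hsumNx : ∑ z ∈ Nx, f z = 2 + 2 * (Z.card : ℝ) - (deg G x : ℝ) := by
      have := Finset.sum_sdiff (f := f) hsubNx
      rw [← hWdef] at this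
      rw [← this, hsumW, hsumI]
      have : (W.card : ℝ) = (deg G x : ℝ) - (Z.card : ℝ) - 1 := by
        have := hcards
        push_cast [← this]
        ring
      rw [this]
      ring
    rw [lap, ← hNx]
    have : ∑ z ∈ Nx, (f z - f x) = ∑ z ∈ Nx, f z := by
      apply Finset.sum_congr rfl
      intro z _
      rw [hfx]; ring
    rw [this, hsumNx]
    field_simp
  -- lap at y
  have hxNy : x ∈ Finset.univ.filter (fun z => G.Adj y z) :=
    Finset.mem_filter.mpr ⟨Finset.mem_univ _, hxy.symm⟩
  have hdypos : 0 < deg G y := by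
    simpa [deg] using Finset.card_pos.mpr ⟨x, hxNy⟩
  have hdypos' : (0:ℝ) < (deg G y : ℝ) := by exact_mod_cast hdypos
  have hlapy : -(1 / (deg G y : ℝ)) ≤ lap G f y := by
    have hsum : (-1:ℝ) ≤ ∑ z ∈ Finset.univ.filter (fun z => G.Adj y z), (f z - f y) := by
      rw [← Finset.add_sum_erase _ _ hxNy]
      have h1 : f x - f y = -1 := by rw [hfx, hfy]; ring
      have h2 : 0 ≤ ∑ z ∈ (Finset.univ.filter (fun z => G.Adj y z)).erase x, (f z - f y) := by
        apply Finset.sum_nonneg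
        intro z hz
        obtain ⟨hzx, hzmem⟩ := Finset.mem_erase.mp hz
        have hyz : G.Adj y z := (Finset.mem_filter.mp hzmem).2
        have : (1:ℝ) ≤ f z := by
          by_cases hzZ : z ∈ Z
          · rw [hfz0 z hzZ]
          · exact hfz z hyz hzx
        rw [hfy]
        linarith
      linarith
    rw [lap]
    calc -(1 / (deg G y : ℝ)) = (deg G y : ℝ)⁻¹ * (-1) := by ring
    _ ≤ _ := mul_le_mul_of_nonneg_left hsum (by positivity)
  -- conclude
  have hmem : lap G f x - lap G f y ∈
      {r : ℝ | ∃ f : V → ℝ, Lip1 G f ∧ f y - f x = 1 ∧ r = lap G f x - lap G f y} :=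
    ⟨f, hlip, by rw [hfy, hfx]; ring, rfl⟩
  have hbdd : BddBelow
      {r : ℝ | ∃ f : V → ℝ, Lip1 G f ∧ f y - f x = 1 ∧ r = lap G f x - lap G f y} := by
    refine ⟨-2, fun r hr => ?_⟩
    obtain ⟨f', hf', -, rfl⟩ := hr
    have h1 := abs_le.mp (abs_lap_le hf' x)
    have h2 := abs_le.mp (abs_lap_le hf' y)
    linarith
  calc kappa G x y ≤ lap G f x - lap G f y := csInf_le hbdd hmem
  _ ≤ ((2 + 2 * (Z.card : ℝ)) / (deg G x : ℝ) - 1) - (-(1 / (deg G y : ℝ))) := by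
      rw [hlapx]; linarith
  _ = (2 + 2 * (Z.card : ℝ)) / (deg G x : ℝ) + 1 / (deg G y : ℝ) - 1 := by ring

end AuxLLY

theorem stmt8 [Fintype V] (G : SimpleGraph V) (hconn : G.Connected)
    (h4 : C4Free G) (hpos : PosLLY G) (hmin : ∀ v : V, 2 ≤ deg G v) :
    maxDeg G ≤ 6 := by
  by_contra hcon
  push_neg at hcon
  have hne : (Finset.univ : Finset V).Nonempty := by
    rcases Finset.univ.eq_empty_or_nonempty (α := V) with h | h
    · rw [maxDeg, h] at hcon
      simp at hcon
    · exact h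
  obtain ⟨x, -, hx⟩ := Finset.exists_mem_eq_sup Finset.univ hne (deg G)
  have hD : 7 ≤ deg G x := by
    rw [maxDeg, hx] at hcon
    omega
  -- key step: every neighbor of x has degree 2, deg x = 7,
  -- and x,y have a (unique) common neighbor
  have key : ∀ y, G.Adj x y →
      deg G x = 7 ∧ deg G y = 2 ∧ ∃ z, G.Adj x z ∧ G.Adj y z := by
    intro y hxy
    have hZ1 : (Finset.univ.filter (fun z => G.Adj x z ∧ G.Adj y z)).card ≤ 1 :=
      zcard_le_one h4 hxy
    set Z := Finset.univ.filter (fun z => G.Adj x z ∧ G.Adj y z) with hZ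
    have hyNx : y ∈ Finset.univ.filter (fun z => G.Adj x z) :=
      Finset.mem_filter.mpr ⟨Finset.mem_univ _, hxy⟩
    have hsubNx : insert y Z ⊆ Finset.univ.filter (fun z => G.Adj x z) := by
      intro a ha
      rcases Finset.mem_insert.mp ha with rfl | haZ
      · exact hyNx
      · exact Finset.mem_filter.mpr ⟨Finset.mem_univ _, (Finset.mem_filter.mp haZ).2.1⟩
    have hWcard : 5 ≤ ((Finset.univ.filter (fun z => G.Adj x z)) \ insert y Z).card := by
      have h1 := Finset.card_sdiff_add_card_eq_card hsubNx
      have h2 : (insert y Z).card ≤ Z.card + 1 := Finset.card_insert_le _ _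
      have h3 : (Finset.univ.filter (fun z => G.Adj x z)).card = deg G x := rfl
      omega
    have hW : ((Finset.univ.filter (fun z => G.Adj x z)) \ insert y Z).Nonempty :=
      Finset.card_pos.mp (by omega)
    have hb := kappa_le_bound hconn h4 hxy hW
    have hp := hpos x y hxy
    have h1 : (1:ℝ) < (2 + 2 * (Z.card : ℝ)) / (deg G x : ℝ) + 1 / (deg G y : ℝ) := by
      rw [hZ] at *
      linarith
    have hdy : 2 ≤ deg G y := hmin y
    -- numeric extraction
    have hD' : (7:ℝ) ≤ (deg G x : ℝ) := by exact_mod_cast hD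
    have hdy' : (2:ℝ) ≤ (deg G y : ℝ) := by exact_mod_cast hdy
    have ht1 : Z.card = 1 := by
      rcases Nat.lt_or_ge Z.card 1 with h | h
      · exfalso
        have ht0 : Z.card = 0 := by omega
        rw [ht0] at h1
        have e1 : (2 + 2 * ((0:ℕ) : ℝ)) / (deg G x : ℝ) ≤ 2 / 7 := by
          push_cast
          apply div_le_div₀ (by norm_num) (by norm_num) (by norm_num) hD'
        have e2 : 1 / (deg G y : ℝ) ≤ 1 / 2 := by
          apply div_le_div₀ (by norm_num) (by norm_num) (by norm_num) hdy'
        linarith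
      · omega
    rw [ht1] at h1
    have hdy2 : deg G y = 2 := by
      by_contra h
      have h3 : 3 ≤ deg G y := by omega
      have h3' : (3:ℝ) ≤ (deg G y : ℝ) := by exact_mod_cast h3
      have e1 : (2 + 2 * ((1:ℕ) : ℝ)) / (deg G x : ℝ) ≤ 4 / 7 := by
        push_cast
        apply div_le_div₀ (by norm_num) (by norm_num) (by norm_num) hD'
      have e2 : 1 / (deg G y : ℝ) ≤ 1 / 3 := by
        apply div_le_div₀ (by norm_num) (by norm_num) (by norm_num) h3'
      linarith
    have hD7 : deg G x = 7 := by
      by_contra h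
      have h8 : 8 ≤ deg G x := by omega
      have h8' : (8:ℝ) ≤ (deg G x : ℝ) := by exact_mod_cast h8
      have e1 : (2 + 2 * ((1:ℕ) : ℝ)) / (deg G x : ℝ) ≤ 4 / 8 := by
        push_cast
        apply div_le_div₀ (by norm_num) (by norm_num) (by norm_num) h8'
      have e2 : 1 / (deg G y : ℝ) ≤ 1 / 2 := by
        apply div_le_div₀ (by norm_num) (by norm_num) (by norm_num) hdy'
      linarith
    refine ⟨hD7, hdy2, ?_⟩
    have : Z.Nonempty := Finset.card_pos.mp (by omega)
    obtain ⟨z, hz⟩ := this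
    exact ⟨z, (Finset.mem_filter.mp hz).2⟩
  -- uniqueness of common neighbors
  have huniq : ∀ y, G.Adj x y → ∀ z1 z2, G.Adj x z1 ∧ G.Adj y z1 →
      G.Adj x z2 ∧ G.Adj y z2 → z1 = z2 := by
    intro y hy z1 z2 h1 h2
    exact Finset.card_le_one.mp (zcard_le_one h4 hy) z1
      (Finset.mem_filter.mpr ⟨Finset.mem_univ _, h1⟩) z2
      (Finset.mem_filter.mpr ⟨Finset.mem_univ _, h2⟩)
  -- the partner involution
  set φ : V → V := fun y =>
    if h : ∃ z, G.Adj x z ∧ G.Adj y z then h.choose else y with hφ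
  have hφspec : ∀ y, G.Adj x y → G.Adj x (φ y) ∧ G.Adj y (φ y) := by
    intro y hy
    have hex := (key y hy).2.2
    rw [hφ]
    simp only [dif_pos hex]
    exact hex.choose_spec
  set Nx := Finset.univ.filter (fun z => G.Adj x z) with hNx
  have hmaps : ∀ a ∈ Nx, φ a ∈ Nx := by
    intro a ha
    exact Finset.mem_filter.mpr
      ⟨Finset.mem_univ _, (hφspec a (Finset.mem_filter.mp ha).2).1⟩
  have hinvol : ∀ a ∈ Nx, φ (φ a) = a := by
    intro a ha
    have hxa : G.Adj x a := (Finset.mem_filter.mp ha).2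
    obtain ⟨h1, h2⟩ := hφspec a hxa
    obtain ⟨h3, h4'⟩ := hφspec (φ a) h1
    exact huniq (φ a) h1 (φ (φ a)) a ⟨h3, h4'⟩ ⟨hxa, h2.symm⟩
  have hnefix : ∀ a ∈ Nx, φ a ≠ a := by
    intro a ha
    have hxa : G.Adj x a := (Finset.mem_filter.mp ha).2
    exact ((hφspec a hxa).2).ne'
  have heven : Even Nx.card := even_card_of_invol φ Nx hmaps hinvol hnefix
  -- deg x = 7
  have hNxne : Nx.Nonempty := by
    have : 0 < Nx.card := by
      have : Nx.card = deg G x := rfl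
      omega
    exact Finset.card_pos.mp this
  obtain ⟨y0, hy0⟩ := hNxne
  have h7 : deg G x = 7 := (key y0 (Finset.mem_filter.mp hy0).2).1
  have : Nx.card = 7 := h7
  rw [this] at heven
  exact (by decide : ¬ Even 7) heven
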